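/- For every real number c2, the special perfect entangler U_d(π/2, c2, 0) maps the four orthonormal product states (Ψ1 ± iΨ3)/√2 and (Ψ2 ± iΨ4)/√2 to four pairwise orthogonal unit vectors each of concurrence 1; i.e., every special perfect entangler transforms this orthonormal product basis into an orthonormal maximally entangled basis. -/

import Mathlib

open Matrix Complex
open scoped Matrix Kronecker

noncomputable section

/-- Pauli matrices -/
def σx : Matrix (Fin 2) (Fin 2) ℂ := !![0, 1; 1, 0]
def σy : Matrix (Fin 2) (Fin 2) ℂ := !![0, -Complex.I; Complex.I, 0]
def σz : Matrix (Fin 2) (Fin 2) ℂ := !![1, 0; 0, -1]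

/-- H(c₁,c₂,c₃) = c₁ σx⊗σx + c₂ σy⊗σy + c₃ σz⊗σz -/
def Hmat (c1 c2 c3 : ℝ) : Matrix (Fin 2 × Fin 2) (Fin 2 × Fin 2) ℂ :=
  (c1 : ℂ) • (σx ⊗ₖ σx) + (c2 : ℂ) • (σy ⊗ₖ σy) + (c3 : ℂ) • (σz ⊗ₖ σz)

/-- U_d(c₁,c₂,c₃) = exp(i H(c₁,c₂,c₃)/2) (matrix exponential) -/
def Ud (c1 c2 c3 : ℝ) : Matrix (Fin 2 × Fin 2) (Fin 2 × Fin 2) ℂ :=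
  NormedSpace.exp ((Complex.I / 2) • Hmat c1 c2 c3)

/-- computational basis vector |ab⟩ of ℂ⁴ = ℂ²⊗ℂ², indexed by pairs -/
def ket (a b : Fin 2) : Fin 2 × Fin 2 → ℂ := fun p => if p = (a, b) then 1 else 0

/-- the magic basis Ψ₁, Ψ₂, Ψ₃, Ψ₄ -/
def Psi : Fin 4 → (Fin 2 × Fin 2 → ℂ) :=
  ![((Real.sqrt 2 : ℂ))⁻¹ • (ket 0 0 + ket 1 1),
    (Complex.I * ((Real.sqrt 2 : ℂ))⁻¹) • (ket 0 1 + ket 1 0),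
    ((Real.sqrt 2 : ℂ))⁻¹ • (ket 0 1 - ket 1 0),
    (Complex.I * ((Real.sqrt 2 : ℂ))⁻¹) • (ket 0 0 - ket 1 1)]

/-- concurrence C = 2|αδ − βγ| of a two-qubit state with components (α,β,γ,δ) -/
def conc (v : Fin 2 × Fin 2 → ℂ) : ℝ :=
  2 * ‖v (0, 0) * v (1, 1) - v (0, 1) * v (1, 0)‖

/-- hermitian inner product on ℂ⁴ -/
def ip (v w : Fin 2 × Fin 2 → ℂ) : ℂ :=
  ∑ p : Fin 2 × Fin 2, (starRingEnd ℂ) (v p) * w p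

/-- the orthonormal product basis {(Ψ₁ ± iΨ₃)/√2, (Ψ₂ ± iΨ₄)/√2} -/
def speBasis : Fin 4 → (Fin 2 × Fin 2 → ℂ) :=
  ![((Real.sqrt 2 : ℂ))⁻¹ • (Psi 0 + Complex.I • Psi 2),
    ((Real.sqrt 2 : ℂ))⁻¹ • (Psi 0 - Complex.I • Psi 2),
    ((Real.sqrt 2 : ℂ))⁻¹ • (Psi 1 + Complex.I • Psi 3),
    ((Real.sqrt 2 : ℂ))⁻¹ • (Psi 1 - Complex.I • Psi 3)]

/-! The magic basis diagonalises `Hmat c1 c2 c3`: `Ψₖ` is an eigenvector with eigenvalue `λₖ`, so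
`Ud` multiplies the magic coordinates of a state by the unit phases `exp (i λₖ / 2)`. In magic
coordinates `a` the hermitian product is the standard one and the concurrence is `‖∑ aₖ²‖`. Unit
phases preserve the standard product, which settles orthonormality. The product basis has
coordinates `(eⱼ ± i eₖ)/√2` with `(j, k) = (1, 3)` or `(2, 4)`, so `∑ aₖ² = 0`; after `Ud`,
`∑ aₖ² = (exp (i λⱼ) - exp (i λₖ)) / 2`, and `λ₁ - λ₃ = 2 (c1 + c3)`, `λ₂ - λ₄ = 2 (c1 - c3)` both
equal `π` for a special perfect entangler, so this sum is a unit complex number. -/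

open ComplexConjugate

theorem Matrix.pow_mulVec_of_mulVec_eq_smul {m R : Type*} [Fintype m] [DecidableEq m]
    [CommRing R] {A : Matrix m m R} {v : m → R} {μ : R} (h : A *ᵥ v = μ • v) (n : ℕ) :
    (A ^ n) *ᵥ v = μ ^ n • v := by
  induction n with
  | zero => simp
  | succ n ih => rw [pow_succ, ← mulVec_mulVec, h, mulVec_smul, ih, smul_smul, pow_succ']

theorem Matrix.exp_mulVec_of_mulVec_eq_smul {m 𝕂 : Type*} [Fintype m] [DecidableEq m] [RCLike 𝕂]
    {A : Matrix m m 𝕂} {v : m → 𝕂} {μ : 𝕂} (h : A *ᵥ v = μ • v) :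
    NormedSpace.exp A *ᵥ v = NormedSpace.exp μ • v := by
  open scoped Norms.Operator in
  have hA := (NormedSpace.exp_series_hasSum_exp' (𝕂 := 𝕂) A).map (mulVec.addMonoidHomLeft v)
    (continuous_id.matrix_mulVec continuous_const)
  refine hA.unique ?_
  convert (NormedSpace.exp_series_hasSum_exp' (𝕂 := 𝕂) μ).smul_const v using 1
  funext n
  simp [mulVec.addMonoidHomLeft, smul_mulVec, pow_mulVec_of_mulVec_eq_smul h, smul_smul]

theorem star_mul_dotProduct_mul_of_norm_eq_one {n : Type*} [Fintype n] {u : n → ℂ}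
    (hu : ∀ k, ‖u k‖ = 1) (a b : n → ℂ) : star (u * a) ⬝ᵥ (u * b) = star a ⬝ᵥ b := by
  refine Finset.sum_congr rfl fun k _ => ?_
  have huk : star (u k) * u k = 1 := by simpa [hu k] using Complex.conj_mul' (u k)
  simp only [Pi.star_apply, Pi.mul_apply, star_mul']
  linear_combination (star (a k) * b k) * huk

lemma ofReal_sqrt_two_sq : ((√2 : ℝ) : ℂ) ^ 2 = 2 := by
  rw [← Complex.ofReal_pow, Real.sq_sqrt zero_le_two, Complex.ofReal_ofNat]

lemma inv_sqrt_two_sq : ((√2 : ℝ) : ℂ)⁻¹ ^ 2 = 1 / 2 := by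
  rw [inv_pow, ofReal_sqrt_two_sq, one_div]

def ofMagic (a : Fin 4 → ℂ) : Fin 2 × Fin 2 → ℂ := ∑ k, a k • Psi k

lemma ofMagic_apply (a : Fin 4 → ℂ) :
    ofMagic a (0, 0) = ((√2 : ℝ) : ℂ)⁻¹ * (a 0 + I * a 3) ∧
    ofMagic a (0, 1) = ((√2 : ℝ) : ℂ)⁻¹ * (I * a 1 + a 2) ∧
    ofMagic a (1, 0) = ((√2 : ℝ) : ℂ)⁻¹ * (I * a 1 - a 2) ∧
    ofMagic a (1, 1) = ((√2 : ℝ) : ℂ)⁻¹ * (a 0 - I * a 3) := by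
  refine ⟨?_, ?_, ?_, ?_⟩ <;> simp [ofMagic, Psi, ket, Fin.sum_univ_four] <;> ring

lemma ip_ofMagic (a b : Fin 4 → ℂ) : ip (ofMagic a) (ofMagic b) = star a ⬝ᵥ b := by
  obtain ⟨a00, a01, a10, a11⟩ := ofMagic_apply a
  obtain ⟨b00, b01, b10, b11⟩ := ofMagic_apply b
  simp only [ip, dotProduct, Fintype.sum_prod_type, Fin.sum_univ_two, Fin.sum_univ_four,
    a00, a01, a10, a11, b00, b01, b10, b11, map_mul, map_add, map_sub, map_inv₀,
    Complex.conj_ofReal, Complex.conj_I, Pi.star_apply, Complex.star_def]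
  linear_combination
    2 * (conj (a 0) * b 0 + conj (a 1) * b 1 + conj (a 2) * b 2 + conj (a 3) * b 3) *
      inv_sqrt_two_sq - 2 * ((√2 : ℝ) : ℂ)⁻¹ ^ 2 * (conj (a 1) * b 1 + conj (a 3) * b 3) * I_sq

lemma conc_ofMagic (a : Fin 4 → ℂ) : conc (ofMagic a) = ‖∑ k, a k ^ 2‖ := by
  obtain ⟨a00, a01, a10, a11⟩ := ofMagic_apply a
  have hdet : ofMagic a (0, 0) * ofMagic a (1, 1) - ofMagic a (0, 1) * ofMagic a (1, 0)
      = (∑ k, a k ^ 2) / 2 := by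
    rw [a00, a01, a10, a11, Fin.sum_univ_four]
    linear_combination (a 0 ^ 2 + a 1 ^ 2 + a 2 ^ 2 + a 3 ^ 2) * inv_sqrt_two_sq
      - ((√2 : ℝ) : ℂ)⁻¹ ^ 2 * (a 1 ^ 2 + a 3 ^ 2) * I_sq
  rw [conc, hdet, norm_div, Complex.norm_two]
  ring

def magicEigenvalue (c1 c2 c3 : ℝ) : Fin 4 → ℝ :=
  ![c1 - c2 + c3, c1 + c2 - c3, -c1 - c2 - c3, -c1 + c2 + c3]

lemma Hmat_mulVec_Psi (c1 c2 c3 : ℝ) (k : Fin 4) :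
    Hmat c1 c2 c3 *ᵥ Psi k = (magicEigenvalue c1 c2 c3 k : ℂ) • Psi k := by
  ext p
  fin_cases k <;> fin_cases p <;>
    simp [Hmat, σx, σy, σz, Psi, ket, magicEigenvalue, mulVec, dotProduct,
      Fintype.sum_prod_type] <;>
    ring

def magicPhase (c1 c2 c3 : ℝ) (k : Fin 4) : ℂ := exp ((magicEigenvalue c1 c2 c3 k / 2 : ℝ) * I)

lemma norm_magicPhase (c1 c2 c3 : ℝ) (k : Fin 4) : ‖magicPhase c1 c2 c3 k‖ = 1 :=
  norm_exp_ofReal_mul_I _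

lemma magicPhase_sq_of_eq_add_pi {c1 c2 c3 : ℝ} {j k : Fin 4}
    (h : magicEigenvalue c1 c2 c3 j = magicEigenvalue c1 c2 c3 k + Real.pi) :
    magicPhase c1 c2 c3 j ^ 2 = -magicPhase c1 c2 c3 k ^ 2 := by
  have hsq (l : Fin 4) : magicPhase c1 c2 c3 l ^ 2 = exp (magicEigenvalue c1 c2 c3 l * I) := by
    rw [magicPhase, ← Complex.exp_nat_mul]
    push_cast
    ring_nf
  rw [hsq, hsq, h]
  push_cast
  rw [add_mul, Complex.exp_add, Complex.exp_pi_mul_I]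
  ring

lemma Ud_mulVec_Psi (c1 c2 c3 : ℝ) (k : Fin 4) :
    Ud c1 c2 c3 *ᵥ Psi k = magicPhase c1 c2 c3 k • Psi k := by
  have hH : ((I / 2) • Hmat c1 c2 c3) *ᵥ Psi k = (I / 2 * magicEigenvalue c1 c2 c3 k) • Psi k := by
    rw [smul_mulVec, Hmat_mulVec_Psi, smul_smul]
  rw [Ud, Matrix.exp_mulVec_of_mulVec_eq_smul hH, ← Complex.exp_eq_exp_ℂ, magicPhase]
  push_cast
  ring_nf

lemma Ud_mulVec_ofMagic (c1 c2 c3 : ℝ) (a : Fin 4 → ℂ) :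
    Ud c1 c2 c3 *ᵥ ofMagic a = ofMagic (magicPhase c1 c2 c3 * a) := by
  simp only [ofMagic, mulVec_sum, mulVec_smul, Ud_mulVec_Psi, smul_smul, Pi.mul_apply, mul_comm]

def speBasisMagicCoord : Fin 4 → Fin 4 → ℂ :=
  ![((√2 : ℝ) : ℂ)⁻¹ • ![1, 0, I, 0], ((√2 : ℝ) : ℂ)⁻¹ • ![1, 0, -I, 0],
    ((√2 : ℝ) : ℂ)⁻¹ • ![0, 1, 0, I], ((√2 : ℝ) : ℂ)⁻¹ • ![0, 1, 0, -I]]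

lemma speBasis_eq_ofMagic (i : Fin 4) : speBasis i = ofMagic (speBasisMagicCoord i) := by
  fin_cases i <;> simp [speBasis, speBasisMagicCoord, ofMagic, Fin.sum_univ_four] <;> module

lemma star_speBasisMagicCoord_dotProduct (i j : Fin 4) :
    star (speBasisMagicCoord i) ⬝ᵥ speBasisMagicCoord j = if i = j then 1 else 0 := by
  fin_cases i <;> fin_cases j <;> simp [speBasisMagicCoord, dotProduct, Fin.sum_univ_four] <;>
    ring_nf <;> simp [ofReal_sqrt_two_sq] <;> norm_num

lemma sum_speBasisMagicCoord_sq (i : Fin 4) : ∑ k, speBasisMagicCoord i k ^ 2 = 0 := by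
  fin_cases i <;> simp [speBasisMagicCoord, Fin.sum_univ_four] <;> ring_nf <;>
    simp [ofReal_sqrt_two_sq]

lemma conc_Ud_mulVec_speBasis (c2 : ℝ) (i : Fin 4) :
    conc (Ud (Real.pi / 2) c2 0 *ᵥ speBasis i) = 1 := by
  set u := magicPhase (Real.pi / 2) c2 0
  have h02 : u 0 ^ 2 = -u 2 ^ 2 :=
    magicPhase_sq_of_eq_add_pi (by simp [magicEigenvalue]; ring)
  have h13 : u 1 ^ 2 = -u 3 ^ 2 :=
    magicPhase_sq_of_eq_add_pi (by simp [magicEigenvalue]; ring)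
  obtain ⟨j, hj⟩ : ∃ j, ∑ k, (u * speBasisMagicCoord i) k ^ 2 = u j ^ 2 := by
    fin_cases i <;> [use 0; use 0; use 1; use 1] <;>
      simp [speBasisMagicCoord, Fin.sum_univ_four, mul_pow, ofReal_sqrt_two_sq, h02, h13] <;>
      ring
  rw [speBasis_eq_ofMagic, Ud_mulVec_ofMagic, conc_ofMagic, hj, norm_pow, norm_magicPhase,
    one_pow]

/-- Every special perfect entangler U_d(π/2, c₂, 0) maps the orthonormal product basis
{(Ψ₁ ± iΨ₃)/√2, (Ψ₂ ± iΨ₄)/√2} to an orthonormal maximally entangled basis. -/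
theorem stmt17 (c2 : ℝ) :
    (∀ i j, ip (speBasis i) (speBasis j) = if i = j then 1 else 0) ∧
    (∀ i, conc (speBasis i) = 0) ∧
    (∀ i j, ip ((Ud (Real.pi / 2) c2 0).mulVec (speBasis i))
        ((Ud (Real.pi / 2) c2 0).mulVec (speBasis j)) = if i = j then 1 else 0) ∧
    (∀ i, conc ((Ud (Real.pi / 2) c2 0).mulVec (speBasis i)) = 1) := by
  have orthonormal (i j : Fin 4) : ip (speBasis i) (speBasis j) = if i = j then 1 else 0 := by
    rw [speBasis_eq_ofMagic, speBasis_eq_ofMagic, ip_ofMagic, star_speBasisMagicCoord_dotProduct]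
  refine ⟨orthonormal, fun i => ?_, fun i j => ?_, conc_Ud_mulVec_speBasis c2⟩
  · rw [speBasis_eq_ofMagic, conc_ofMagic, sum_speBasisMagicCoord_sq, norm_zero]
  · rw [speBasis_eq_ofMagic, speBasis_eq_ofMagic, Ud_mulVec_ofMagic, Ud_mulVec_ofMagic,
      ip_ofMagic, star_mul_dotProduct_mul_of_norm_eq_one (norm_magicPhase _ _ _),
      ← ip_ofMagic, ← speBasis_eq_ofMagic, ← speBasis_eq_ofMagic, orthonormal]
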